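/- arXiv:1709.07180 — 7 statements merged into one kernel-verified Lean document; each statement's English description precedes it below -/
import Mathlib

section
/- Let α ∈ (0,1], let H be a symmetric n×n matrix, λ_H = λ_min(H), and let κ̄ > 1, κ_r ≥ 0, γ ≥ 0 be given. Define ψ(λ) = λ^{1/α}(λ + λ_H) − κ̄^{1/α}(1+κ_r)γ for λ ≥ max(0, −λ_H) =: λ₁. Then ψ is strictly increasing on [λ₁, ∞) whenever γ > 0, ψ(λ₁) < 0 when γ > 0, and for λ₂ := −λ_H + 2 max(|λ_H|, κ̄^{1/(1+α)}(1+κ_r)^{α/(1+α)} γ^{α/(1+α)}) one has ψ(λ₂) > 0 when γ > 0. Consequently any μ ≥ 0 with ψ(μ) ≤ 0 and μ ≥ λ₁, or μ ≤ λ₁, satisfies μ ≤ λ₂. -/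
/-- properties of `ψ(λ) = λ^(1/α)(λ + λH) - κ̄^(1/α)(1+κr)γ` on `[λ₁, ∞)`
with `λ₁ = max 0 (-λH)`, and the upper bound `λ₂` for any `μ` with `ψ(μ) ≤ 0`. -/
theorem psi_properties (α lamH κb κr γ : ℝ)
    (hα0 : 0 < α) (hα1 : α ≤ 1) (hκb : 1 < κb) (hκr : 0 ≤ κr) (hγ : 0 ≤ γ) :
    let ψ : ℝ → ℝ := fun l => l ^ (1 / α) * (l + lamH) - κb ^ (1 / α) * (1 + κr) * γ
    let l₁ : ℝ := max 0 (-lamH)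
    let l₂ : ℝ := -lamH +
      2 * max |lamH| (κb ^ (1 / (1 + α)) * (1 + κr) ^ (α / (1 + α)) * γ ^ (α / (1 + α)))
    (0 < γ → StrictMonoOn ψ (Set.Ici l₁)) ∧
    (0 < γ → ψ l₁ < 0) ∧
    (0 < γ → 0 < ψ l₂) ∧
    (∀ μ : ℝ, 0 ≤ μ → ((ψ μ ≤ 0 ∧ l₁ ≤ μ) ∨ μ ≤ l₁) → μ ≤ l₂) := by
  intro ψ l₁ l₂
  have hαne : α ≠ 0 := ne_of_gt hα0
  have h1α : 0 < 1 / α := by positivity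
  have hκb0 : (0:ℝ) < κb := lt_trans zero_lt_one hκb
  have hκr1 : (0:ℝ) < 1 + κr := by linarith
  have h1a : (0:ℝ) < 1 + α := by linarith
  set B : ℝ := κb ^ (1 / (1 + α)) * (1 + κr) ^ (α / (1 + α)) * γ ^ (α / (1 + α)) with hB
  have hB0 : 0 ≤ B := by
    exact mul_nonneg (mul_nonneg (Real.rpow_nonneg hκb0.le _) (Real.rpow_nonneg hκr1.le _))
      (Real.rpow_nonneg hγ _)
  have hM0 : (0:ℝ) ≤ max |lamH| B := le_trans (abs_nonneg lamH) (le_max_left _ _)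
  have hMabs : |lamH| ≤ max |lamH| B := le_max_left _ _
  have hl₁0 : (0:ℝ) ≤ l₁ := le_max_left _ _
  have hl₁H : -lamH ≤ l₁ := le_max_right _ _
  have hl₂def : l₂ = -lamH + 2 * max |lamH| B := rfl
  have habs1 : lamH ≤ |lamH| := le_abs_self lamH
  have habs2 : -|lamH| ≤ lamH := neg_abs_le lamH
  have hl₂0 : (0:ℝ) ≤ l₂ := by rw [hl₂def]; linarith
  have hl₁l₂ : l₁ ≤ l₂ := by
    apply max_le hl₂0
    rw [hl₂def]; linarith
  -- f(l₁) = 0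
  have hfl₁ : l₁ ^ (1 / α) * (l₁ + lamH) = 0 := by
    rcases le_total (-lamH) 0 with h | h
    · have hl : l₁ = 0 := max_eq_left h
      rw [hl, Real.zero_rpow (ne_of_gt h1α), zero_mul]
    · have hl : l₁ = -lamH := max_eq_right h
      rw [hl]; ring
  -- strict monotonicity (independent of γ)
  have mono : StrictMonoOn ψ (Set.Ici l₁) := by
    intro a ha b hb hab
    have ha0 : 0 ≤ a := le_trans hl₁0 ha
    have haH : 0 ≤ a + lamH := by have := le_trans hl₁H ha; linarith
    have hb0 : 0 < b := lt_of_le_of_lt ha0 hab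
    have h1 : a ^ (1 / α) ≤ b ^ (1 / α) := Real.rpow_le_rpow ha0 hab.le h1α.le
    have h2 : (0:ℝ) < b ^ (1 / α) := Real.rpow_pos_of_pos hb0 _
    have key : a ^ (1 / α) * (a + lamH) < b ^ (1 / α) * (b + lamH) := by
      calc a ^ (1 / α) * (a + lamH) ≤ b ^ (1 / α) * (a + lamH) :=
            mul_le_mul_of_nonneg_right h1 haH
        _ < b ^ (1 / α) * (b + lamH) := by
            apply mul_lt_mul_of_pos_left _ h2; linarith
    show a ^ (1 / α) * (a + lamH) - κb ^ (1 / α) * (1 + κr) * γ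
        < b ^ (1 / α) * (b + lamH) - κb ^ (1 / α) * (1 + κr) * γ
    linarith
  -- B ^ (1/α + 1) = C
  have hpow : B ^ (1 / α + 1) = κb ^ (1 / α) * (1 + κr) * γ := by
    have e1 : (1 / (1 + α)) * (1 / α + 1) = 1 / α := by
      field_simp
    have e2 : (α / (1 + α)) * (1 / α + 1) = 1 := by
      field_simp
    rw [hB, Real.mul_rpow
        (mul_nonneg (Real.rpow_nonneg hκb0.le _) (Real.rpow_nonneg hκr1.le _))
        (Real.rpow_nonneg hγ _),
      Real.mul_rpow (Real.rpow_nonneg hκb0.le _) (Real.rpow_nonneg hκr1.le _),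
      ← Real.rpow_mul hκb0.le, ← Real.rpow_mul hκr1.le, ← Real.rpow_mul hγ,
      e1, e2, Real.rpow_one, Real.rpow_one]
  -- ψ l₂ > 0 when γ > 0
  have part3 : 0 < γ → 0 < ψ l₂ := by
    intro hγ'
    have hBpos : 0 < B :=
      mul_pos (mul_pos (Real.rpow_pos_of_pos hκb0 _) (Real.rpow_pos_of_pos hκr1 _))
        (Real.rpow_pos_of_pos hγ' _)
    have hBM : B ≤ max |lamH| B := le_max_right _ _
    have hBl₂ : B ≤ l₂ := by rw [hl₂def]; linarith
    have h1 : B ^ (1 / α) ≤ l₂ ^ (1 / α) := Real.rpow_le_rpow hBpos.le hBl₂ h1α.le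
    have hsum : l₂ + lamH = 2 * max |lamH| B := by rw [hl₂def]; ring
    have h3 : B ^ (1 / α) * (2 * B) ≤ l₂ ^ (1 / α) * (l₂ + lamH) := by
      rw [hsum]
      exact mul_le_mul h1 (by linarith) (by linarith) (Real.rpow_nonneg hl₂0 _)
    have hsplit : B ^ (1 / α + 1) = B ^ (1 / α) * B := by
      rw [Real.rpow_add hBpos, Real.rpow_one]
    have hCpos : 0 < κb ^ (1 / α) * (1 + κr) * γ :=
      mul_pos (mul_pos (Real.rpow_pos_of_pos hκb0 _) hκr1) hγ'
    show 0 < l₂ ^ (1 / α) * (l₂ + lamH) - κb ^ (1 / α) * (1 + κr) * γ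
    nlinarith [hpow, hsplit, h3]
  refine ⟨fun _ => mono, ?_, part3, ?_⟩
  · intro hγ'
    have hCpos : 0 < κb ^ (1 / α) * (1 + κr) * γ :=
      mul_pos (mul_pos (Real.rpow_pos_of_pos hκb0 _) hκr1) hγ'
    show l₁ ^ (1 / α) * (l₁ + lamH) - κb ^ (1 / α) * (1 + κr) * γ < 0
    rw [hfl₁]; linarith
  · intro μ hμ0 h
    rcases h with ⟨hψμ, hl₁μ⟩ | hμl₁
    · by_contra hc
      push_neg at hc
      rcases eq_or_lt_of_le hγ with hγ0 | hγ'
      · -- γ = 0 : then ψ μ > 0, contradiction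
        have hμpos : 0 < μ := lt_of_le_of_lt hl₂0 hc
        have hμH : 0 < μ + lamH := by
          have : -lamH ≤ l₂ := by rw [hl₂def]; linarith
          linarith
        have hfpos : 0 < μ ^ (1 / α) * (μ + lamH) :=
          mul_pos (Real.rpow_pos_of_pos hμpos _) hμH
        have : ψ μ = μ ^ (1 / α) * (μ + lamH) - κb ^ (1 / α) * (1 + κr) * γ := rfl
        rw [this, ← hγ0, mul_zero, sub_zero] at hψμ
        linarith
      · have hlt : ψ l₂ < ψ μ := mono (Set.mem_Ici.mpr hl₁l₂) (Set.mem_Ici.mpr hl₁μ) hc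
        have := part3 hγ'
        linarith
    · linarith [hl₁l₂]
end

section
/- Let f : ℝⁿ → ℝ be C² with α-Hölder Hessian (constant L_{H,α}, α ∈ (0,1]). Suppose at iterate x_k, (H_k + M_k)s_k = −g_k + r_k with ‖r_k‖ ≤ κ_rs ‖M_k s_k‖, λ_min(M_k) ≤ κ̄ ‖s_k‖^α, M_k symmetric positive semidefinite with κ(M_k) ≤ κ_κ when M_k ≠ 0, and let g_{k+1} = ∇f(x_k + s_k). Then ‖g_{k+1}‖ ≤ [L_{H,α}/(1+α) + κ_κ(1+κ_rs)κ̄] ‖s_k‖^{1+α}, and consequently ‖s_k‖ ≥ κ̄_s ‖g_{k+1}‖^{1/(1+α)} with κ̄_s = [L_{H,α}/(1+α) + κ_κ(1+κ_rs)κ̄]^{−1/(1+α)}. -/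
/-- The least eigenvalue of a real symmetric matrix. -/
noncomputable def lamMin {n : ℕ} (A : Matrix (Fin n) (Fin n) ℝ) (hA : A.IsHermitian) : ℝ :=
  ⨅ i, hA.eigenvalues i

/-- The greatest eigenvalue of a real symmetric matrix. -/
noncomputable def lamMax {n : ℕ} (A : Matrix (Fin n) (Fin n) ℝ) (hA : A.IsHermitian) : ℝ :=
  ⨆ i, hA.eigenvalues i

lemma mat_bound {n : ℕ} (M : Matrix (Fin n) (Fin n) ℝ) (hM : M.IsHermitian)
    (c : ℝ) (hc : 0 ≤ c) (hle : ∀ i, |hM.eigenvalues i| ≤ c)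
    (x : EuclideanSpace ℝ (Fin n)) :
    ‖Matrix.toEuclideanLin M x‖ ≤ c * ‖x‖ := by
  set b := hM.eigenvectorBasis with hb
  have key : ∀ i, Matrix.toEuclideanLin M (b i) = hM.eigenvalues i • b i := by
    intro i
    ext j
    have := congrFun (hM.mulVec_eigenvectorBasis i) j
    simpa [Matrix.toEuclideanLin_apply] using this
  have hsym := (Matrix.isHermitian_iff_isSymmetric.mp hM)
  have hrepr : ∀ i, b.repr (Matrix.toEuclideanLin M x) i
      = hM.eigenvalues i * b.repr x i := by
    intro i
    rw [b.repr_apply_apply, b.repr_apply_apply]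
    calc inner ℝ (b i) (Matrix.toEuclideanLin M x)
        = inner ℝ (Matrix.toEuclideanLin M (b i)) x := (hsym _ _).symm
      _ = inner ℝ ((hM.eigenvalues i : ℝ) • b i) x := by rw [key]
      _ = hM.eigenvalues i * inner ℝ (b i) x := by
          rw [real_inner_smul_left]
  have h1 : ‖Matrix.toEuclideanLin M x‖ = ‖b.repr (Matrix.toEuclideanLin M x)‖ :=
    (b.repr.norm_map _).symm
  have h2 : ‖x‖ = ‖b.repr x‖ := (b.repr.norm_map _).symm
  rw [h1, h2, EuclideanSpace.norm_eq, EuclideanSpace.norm_eq]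
  rw [← Real.sqrt_sq hc, ← Real.sqrt_mul (by positivity)]
  apply Real.sqrt_le_sqrt
  rw [Finset.mul_sum]
  apply Finset.sum_le_sum
  intro i _
  rw [hrepr i]
  have hthis : ‖hM.eigenvalues i * b.repr x i‖ ≤ c * ‖b.repr x i‖ := by
    rw [norm_mul]
    exact mul_le_mul_of_nonneg_right (by simpa using hle i) (norm_nonneg _)
  calc ‖hM.eigenvalues i * b.repr x i‖ ^ 2 ≤ (c * ‖b.repr x i‖) ^ 2 := by
        apply pow_le_pow_left₀ (norm_nonneg _) hthis
    _ = c ^ 2 * ‖b.repr x i‖ ^ 2 := by ring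

lemma taylor_bound {n : ℕ}
    (g : EuclideanSpace ℝ (Fin n) → EuclideanSpace ℝ (Fin n))
    (Hess : EuclideanSpace ℝ (Fin n) → (EuclideanSpace ℝ (Fin n) →L[ℝ] EuclideanSpace ℝ (Fin n)))
    (L α : ℝ) (hα0 : 0 < α) (hL : 0 ≤ L)
    (hHess : ∀ x, HasFDerivAt g (Hess x) x)
    (hHol : ∀ x y, ‖Hess x - Hess y‖ ≤ L * ‖x - y‖ ^ α)
    (x s : EuclideanSpace ℝ (Fin n)) :
    ‖g (x + s) - g x - Hess x s‖ ≤ L / (1 + α) * ‖s‖ ^ (1 + α) := by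
  have hcont : Continuous Hess := by
    rw [continuous_iff_continuousAt]
    intro y
    rw [ContinuousAt, tendsto_iff_norm_sub_tendsto_zero]
    apply squeeze_zero (fun z => norm_nonneg _) (fun z => hHol z y)
    have h0 : Filter.Tendsto (fun z : EuclideanSpace ℝ (Fin n) => ‖z - y‖) (nhds y) (nhds 0) := by
      have hc : Continuous (fun z : EuclideanSpace ℝ (Fin n) => ‖z - y‖) :=
        (continuous_id.sub continuous_const).norm
      have := hc.tendsto y
      simpa using this
    have h1 : Filter.Tendsto (fun t : ℝ => L * t ^ α) (nhds 0) (nhds (L * (0:ℝ) ^ α)) := by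
      apply Filter.Tendsto.const_mul
      exact (Real.continuousAt_rpow_const 0 α (Or.inr hα0.le)).tendsto
    have := h1.comp h0
    simpa [Real.zero_rpow hα0.ne', Function.comp_def] using this
  set γ : ℝ → EuclideanSpace ℝ (Fin n) := fun t => x + t • s with hγ
  have hγd : ∀ t : ℝ, HasDerivAt γ s t := by
    intro t
    simpa [hγ] using ((hasDerivAt_id t).smul_const s).const_add x
  have hd : ∀ t ∈ Set.uIcc (0:ℝ) 1, HasDerivAt (fun t => g (γ t)) (Hess (γ t) s) t := by
    intro t _
    exact (hHess (γ t)).comp_hasDerivAt t (hγd t)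
  have hcont2 : Continuous fun t => Hess (γ t) s := by
    have : Continuous γ := continuous_const.add (continuous_id.smul continuous_const)
    exact ((hcont.comp this).clm_apply continuous_const)
  have hInt : IntervalIntegrable (fun t => Hess (γ t) s) MeasureTheory.volume 0 1 :=
    hcont2.intervalIntegrable 0 1
  have hftc : ∫ t in (0:ℝ)..1, Hess (γ t) s = g (γ 1) - g (γ 0) :=
    intervalIntegral.integral_eq_sub_of_hasDerivAt hd hInt
  have hγ0 : γ 0 = x := by simp [hγ]
  have hγ1 : γ 1 = x + s := by simp [hγ]
  have hsub : g (x + s) - g x - Hess x s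
      = ∫ t in (0:ℝ)..1, (Hess (γ t) s - Hess x s) := by
    rw [intervalIntegral.integral_sub hInt (intervalIntegrable_const), hftc, hγ0, hγ1]
    simp
  rw [hsub]
  have hbound : ∀ t ∈ Set.Ioc (0:ℝ) 1, ‖Hess (γ t) s - Hess x s‖
      ≤ L * ‖s‖ ^ (1 + α) * t ^ α := by
    intro t ht
    have h1 : ‖Hess (γ t) s - Hess x s‖ ≤ ‖Hess (γ t) - Hess x‖ * ‖s‖ := by
      calc ‖Hess (γ t) s - Hess x s‖ = ‖(Hess (γ t) - Hess x) s‖ := by simp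
        _ ≤ ‖Hess (γ t) - Hess x‖ * ‖s‖ := (Hess (γ t) - Hess x).le_opNorm s
    have h2 : ‖γ t - x‖ = t * ‖s‖ := by
      simp [hγ, norm_smul, abs_of_pos ht.1]
    calc ‖Hess (γ t) s - Hess x s‖ ≤ ‖Hess (γ t) - Hess x‖ * ‖s‖ := h1
      _ ≤ (L * (t * ‖s‖) ^ α) * ‖s‖ := by
          apply mul_le_mul_of_nonneg_right _ (norm_nonneg _)
          rw [← h2]; exact hHol _ _
      _ = L * ‖s‖ ^ (1 + α) * t ^ α := by
          rw [Real.mul_rpow ht.1.le (norm_nonneg s),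
            Real.rpow_add' (norm_nonneg s) (by positivity), Real.rpow_one]
          ring
  have hIb : IntervalIntegrable (fun t : ℝ => L * ‖s‖ ^ (1 + α) * t ^ α)
      MeasureTheory.volume 0 1 := by
    apply IntervalIntegrable.const_mul
    exact intervalIntegral.intervalIntegrable_rpow' (by linarith)
  have := intervalIntegral.norm_integral_le_abs_of_norm_le (f := fun t => Hess (γ t) s - Hess x s)
    (g := fun t => L * ‖s‖ ^ (1 + α) * t ^ α) ?_ hIb
  · refine this.trans (le_of_eq ?_)
    rw [intervalIntegral.integral_const_mul, integral_rpow (Or.inl (by linarith))]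
    rw [Real.one_rpow, Real.zero_rpow (by positivity)]
    rw [abs_of_nonneg (by positivity)]
    ring
  · rw [MeasureTheory.ae_restrict_iff' measurableSet_uIoc]
    filter_upwards with t ht
    exact hbound t (by simpa [Set.uIoc_of_le (by norm_num : (0:ℝ) ≤ 1)] using ht)

/-- long-step property. With `α`-Hölder Hessian (constant `L`),
`(Hₖ + Mₖ)sₖ = -gₖ + rₖ`, `‖rₖ‖ ≤ κrs ‖Mₖ sₖ‖`, `λmin(Mₖ) ≤ κ̄ ‖sₖ‖^α`, `Mₖ ⪰ 0`
symmetric with condition number bounded by `κκ` when `Mₖ ≠ 0`, we get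
`‖g(xₖ+sₖ)‖ ≤ [L/(1+α) + κκ(1+κrs)κ̄] ‖sₖ‖^(1+α)` and
`‖sₖ‖ ≥ κ̄ₛ ‖g(xₖ+sₖ)‖^(1/(1+α))` with
`κ̄ₛ = [L/(1+α) + κκ(1+κrs)κ̄]^(−1/(1+α))`. -/
theorem step_lower_bound {n : ℕ} [NeZero n]
    (f : EuclideanSpace ℝ (Fin n) → ℝ)
    (Hess : EuclideanSpace ℝ (Fin n) → (EuclideanSpace ℝ (Fin n) →L[ℝ] EuclideanSpace ℝ (Fin n)))
    (L α κrs κb κκ : ℝ)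
    (hα0 : 0 < α) (hα1 : α ≤ 1) (hκκ : 1 ≤ κκ) (hκrs : 0 ≤ κrs) (hκb : 1 < κb)
    (hf : ContDiff ℝ 2 f)
    (hHess : ∀ x, HasFDerivAt (gradient f) (Hess x) x)
    (hHol : ∀ x y, ‖Hess x - Hess y‖ ≤ L * ‖x - y‖ ^ α)
    (xk sk rk : EuclideanSpace ℝ (Fin n))
    (M : Matrix (Fin n) (Fin n) ℝ) (hM : M.IsHermitian) (hMpsd : M.PosSemidef)
    (heq : Hess xk sk + Matrix.toEuclideanLin M sk = -gradient f xk + rk)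
    (hr : ‖rk‖ ≤ κrs * ‖Matrix.toEuclideanLin M sk‖)
    (hlam : lamMin M hM ≤ κb * ‖sk‖ ^ α)
    (hcond : M ≠ 0 → lamMax M hM ≤ κκ * lamMin M hM) :
    ‖gradient f (xk + sk)‖ ≤ (L / (1 + α) + κκ * (1 + κrs) * κb) * ‖sk‖ ^ (1 + α) ∧
    (L / (1 + α) + κκ * (1 + κrs) * κb) ^ (-(1 / (1 + α))) *
        ‖gradient f (xk + sk)‖ ^ (1 / (1 + α)) ≤ ‖sk‖ := by
  have hL : 0 ≤ L := by
    have h := hHol 0 (EuclideanSpace.single (0 : Fin n) (1:ℝ))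
    have hn : ‖(0 : EuclideanSpace ℝ (Fin n)) - EuclideanSpace.single (0 : Fin n) (1:ℝ)‖ = 1 := by
      rw [zero_sub, norm_neg, EuclideanSpace.norm_single]
      norm_num
    rw [hn, Real.one_rpow, mul_one] at h
    exact le_trans (norm_nonneg _) h
  have hevnonneg : ∀ i, 0 ≤ hM.eigenvalues i := fun i => hMpsd.eigenvalues_nonneg i
  -- bound on ‖M sk‖
  have hMs : ‖Matrix.toEuclideanLin M sk‖ ≤ κκ * κb * ‖sk‖ ^ (1 + α) := by
    by_cases hM0 : M = 0
    · subst hM0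
      simp only [map_zero, LinearMap.zero_apply, norm_zero]
      have : (0:ℝ) ≤ ‖sk‖ ^ (1 + α) := Real.rpow_nonneg (norm_nonneg _) _
      positivity
    · have hmax : lamMax M hM ≤ κκ * (κb * ‖sk‖ ^ α) :=
        (hcond hM0).trans (mul_le_mul_of_nonneg_left hlam (by linarith))
      have hile : ∀ i, |hM.eigenvalues i| ≤ κκ * (κb * ‖sk‖ ^ α) := by
        intro i
        rw [abs_of_nonneg (hevnonneg i)]
        have hle : hM.eigenvalues i ≤ lamMax M hM := le_ciSup (Finite.bddAbove_range _) i
        exact hle.trans hmax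
      have hc0 : (0:ℝ) ≤ κκ * (κb * ‖sk‖ ^ α) := by
        have h0 : (0:ℝ) ≤ ‖sk‖ ^ α := Real.rpow_nonneg (norm_nonneg _) _
        exact mul_nonneg (by linarith) (mul_nonneg (by linarith) h0)
      have := mat_bound M hM _ hc0 hile sk
      refine this.trans (le_of_eq ?_)
      rw [Real.rpow_add' (norm_nonneg sk) (by positivity), Real.rpow_one]
      ring
  have hT := taylor_bound (gradient f) Hess L α hα0 hL hHess hHol xk sk
  -- rearranged equation
  have h2 : gradient f xk + Hess xk sk = rk - Matrix.toEuclideanLin M sk := by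
    have h := congrArg (fun v => gradient f xk + v - Matrix.toEuclideanLin M sk) heq
    abel_nf at h ⊢
    exact h
  have part1 : ‖gradient f (xk + sk)‖
      ≤ (L / (1 + α) + κκ * (1 + κrs) * κb) * ‖sk‖ ^ (1 + α) := by
    calc ‖gradient f (xk + sk)‖
        = ‖(gradient f (xk + sk) - gradient f xk - Hess xk sk)
            + (gradient f xk + Hess xk sk)‖ := by congr 1; abel
      _ ≤ ‖gradient f (xk + sk) - gradient f xk - Hess xk sk‖
            + ‖gradient f xk + Hess xk sk‖ := norm_add_le _ _
      _ = ‖gradient f (xk + sk) - gradient f xk - Hess xk sk‖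
            + ‖rk - Matrix.toEuclideanLin M sk‖ := by rw [h2]
      _ ≤ L / (1 + α) * ‖sk‖ ^ (1 + α) + (‖rk‖ + ‖Matrix.toEuclideanLin M sk‖) :=
            add_le_add hT (norm_sub_le _ _)
      _ ≤ L / (1 + α) * ‖sk‖ ^ (1 + α)
            + (1 + κrs) * ‖Matrix.toEuclideanLin M sk‖ := by
            have := hr; nlinarith [norm_nonneg (Matrix.toEuclideanLin M sk)]
      _ ≤ L / (1 + α) * ‖sk‖ ^ (1 + α) + (1 + κrs) * (κκ * κb * ‖sk‖ ^ (1 + α)) := by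
            have h1κ : (0:ℝ) ≤ 1 + κrs := by linarith
            nlinarith
      _ = (L / (1 + α) + κκ * (1 + κrs) * κb) * ‖sk‖ ^ (1 + α) := by ring
  refine ⟨part1, ?_⟩
  set C := L / (1 + α) + κκ * (1 + κrs) * κb with hC
  have hCpos : 0 < C := by
    have h1 : 0 ≤ L / (1 + α) := by positivity
    have h2' : (0:ℝ) < κκ * (1 + κrs) * κb :=
      mul_pos (mul_pos (by linarith) (by linarith)) (by linarith)
    rw [hC]
    linarith
  have hp : 0 < 1 / (1 + α) := by positivity
  have h3 : ‖gradient f (xk + sk)‖ ^ (1 / (1 + α))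
      ≤ (C * ‖sk‖ ^ (1 + α)) ^ (1 / (1 + α)) :=
    Real.rpow_le_rpow (norm_nonneg _) part1 hp.le
  rw [Real.mul_rpow hCpos.le (Real.rpow_nonneg (norm_nonneg _) _),
    ← Real.rpow_mul (norm_nonneg sk), mul_one_div, div_self (by positivity),
    Real.rpow_one] at h3
  calc C ^ (-(1 / (1 + α))) * ‖gradient f (xk + sk)‖ ^ (1 / (1 + α))
      ≤ C ^ (-(1 / (1 + α))) * (C ^ (1 / (1 + α)) * ‖sk‖) :=
        mul_le_mul_of_nonneg_left h3 (Real.rpow_nonneg hCpos.le _)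
    _ = ‖sk‖ := by
        rw [← mul_assoc, ← Real.rpow_add hCpos]
        simp
end

section
/- Suppose an iterative method satisfies (H_k + M_k)s_k = −g_k + r_k with ‖r_k‖ ≤ κ_rg‖g_k‖ (κ_rg ∈ [0,1)), ‖H_k‖ ≤ L_g, ‖M_k‖ ≤ κ̄_λ, and the convergence rate ‖g_{k+1}‖ ≤ κ_c ‖g_k‖^{1+α} for fixed α ∈ [0,1] and κ_c > 0. Then for all k with g_{k+1} ≠ 0, ‖s_k‖ ≥ κ̄_{s,α} ‖g_{k+1}‖^{1/(1+α)} where κ̄_{s,α} = (1−κ_rg) / ((L_g + κ̄_λ) κ_c^{1/(1+α)}). -/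
/-- if `(Hₖ + Mₖ)sₖ = -gₖ + rₖ` with `‖rₖ‖ ≤ κrg‖gₖ‖`, `‖Hₖ‖ ≤ Lg`,
`‖Mₖ‖ ≤ κ̄λ` (Hₖ, Mₖ symmetric), and `‖g_{k+1}‖ ≤ κc ‖gₖ‖^(1+α)`, then for all `k` with
`g_{k+1} ≠ 0`, `‖sₖ‖ ≥ κ̄ₛ ‖g_{k+1}‖^(1/(1+α))`,
`κ̄ₛ = (1−κrg)/((Lg+κ̄λ) κc^(1/(1+α)))`. -/
theorem step_lower_bound_of_fast_convergence {n : ℕ}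
    (H M : ℕ → (EuclideanSpace ℝ (Fin n) →L[ℝ] EuclideanSpace ℝ (Fin n)))
    (s g r : ℕ → EuclideanSpace ℝ (Fin n))
    (κrg Lg κb κc α : ℝ)
    (hκrg0 : 0 ≤ κrg) (hκrg1 : κrg < 1) (hα0 : 0 ≤ α) (hα1 : α ≤ 1) (hκc : 0 < κc)
    (hsym : ∀ k, IsSelfAdjoint (H k) ∧ IsSelfAdjoint (M k))
    (heq : ∀ k, (H k + M k) (s k) = -(g k) + r k)
    (hr : ∀ k, ‖r k‖ ≤ κrg * ‖g k‖)
    (hHb : ∀ k, ‖H k‖ ≤ Lg) (hMb : ∀ k, ‖M k‖ ≤ κb)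
    (hrate : ∀ k, ‖g (k + 1)‖ ≤ κc * ‖g k‖ ^ (1 + α)) :
    ∀ k, g (k + 1) ≠ 0 →
      (1 - κrg) / ((Lg + κb) * κc ^ (1 / (1 + α))) * ‖g (k + 1)‖ ^ (1 / (1 + α)) ≤ ‖s k‖ := by
  intro k hk
  have h1α : (0:ℝ) < 1 + α := by linarith
  have hc : (0:ℝ) < κc ^ (1 / (1 + α)) := Real.rpow_pos_of_pos hκc _
  have hHnn : (0:ℝ) ≤ Lg := le_trans (norm_nonneg _) (hHb 0)
  have hMnn : (0:ℝ) ≤ κb := le_trans (norm_nonneg _) (hMb 0)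
  have hx : ‖g (k + 1)‖ ^ (1 / (1 + α)) ≤ κc ^ (1 / (1 + α)) * ‖g k‖ := by
    calc ‖g (k + 1)‖ ^ (1 / (1 + α))
        ≤ (κc * ‖g k‖ ^ (1 + α)) ^ (1 / (1 + α)) :=
          Real.rpow_le_rpow (norm_nonneg _) (hrate k) (by positivity)
      _ = κc ^ (1 / (1 + α)) * (‖g k‖ ^ (1 + α)) ^ (1 / (1 + α)) :=
          Real.mul_rpow hκc.le (by positivity)
      _ = κc ^ (1 / (1 + α)) * ‖g k‖ := by
          rw [← Real.rpow_mul (norm_nonneg _), mul_one_div, div_self h1α.ne',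
            Real.rpow_one]
  -- lower bound on (Lg+κb)‖s k‖
  have h2 : (1 - κrg) * ‖g k‖ ≤ (Lg + κb) * ‖s k‖ := by
    have e1 : ‖-(g k) + r k‖ ≤ (Lg + κb) * ‖s k‖ := by
      rw [← heq k]
      calc ‖(H k + M k) (s k)‖ ≤ ‖H k + M k‖ * ‖s k‖ := (H k + M k).le_opNorm _
        _ ≤ (Lg + κb) * ‖s k‖ := by
            apply mul_le_mul_of_nonneg_right _ (norm_nonneg _)
            exact le_trans (norm_add_le _ _) (add_le_add (hHb k) (hMb k))
    have e2 : ‖g k‖ - ‖r k‖ ≤ ‖-(g k) + r k‖ := by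
      have h := norm_sub_norm_le (g k) (r k)
      have heq2 : ‖-(g k) + r k‖ = ‖g k - r k‖ := by
        rw [show -(g k) + r k = -(g k - r k) by abel, norm_neg]
      rw [heq2]; exact h
    calc (1 - κrg) * ‖g k‖ = ‖g k‖ - κrg * ‖g k‖ := by ring
      _ ≤ ‖g k‖ - ‖r k‖ := by linarith [hr k]
      _ ≤ ‖-(g k) + r k‖ := e2
      _ ≤ (Lg + κb) * ‖s k‖ := e1
  rcases eq_or_lt_of_le (by linarith : (0:ℝ) ≤ Lg + κb) with hLM | hLM
  · rw [← hLM, zero_mul, div_zero, zero_mul]; exact norm_nonneg _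
  · rw [div_mul_eq_mul_div, div_le_iff₀ (mul_pos hLM hc)]
    nlinarith [norm_nonneg (s k), norm_nonneg (g k),
      mul_le_mul_of_nonneg_left hx (by linarith : (0:ℝ) ≤ 1 - κrg),
      mul_le_mul_of_nonneg_left h2 hc.le]
end

section
/- Let α ∈ (0,1], σ > 0, L_g ≥ 0 and define for s ∈ ℝⁿ the regularized model m(s) = f₀ + gᵀs + ½ sᵀHs + (σ/(2+α))‖s‖^{2+α}, where H is symmetric with ‖H‖ ≤ L_g. If s satisfies m(s) < f₀, then ‖s‖ ≤ max( (3(2+α)L_g/(4σ))^{1/α}, (3(2+α)‖g‖/σ)^{1/(1+α)} ). -/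
/-- if the `(2+α)`-regularized model value at `s` is below `f₀`,
then `‖s‖ ≤ max((3(2+α)Lg/(4σ))^(1/α), (3(2+α)‖g‖/σ)^(1/(1+α)))`. -/
theorem regularized_step_upper_bound {n : ℕ}
    (α σ Lg f₀ : ℝ) (hα0 : 0 < α) (hα1 : α ≤ 1) (hσ : 0 < σ) (hLg : 0 ≤ Lg)
    (g : EuclideanSpace ℝ (Fin n))
    (H : EuclideanSpace ℝ (Fin n) →L[ℝ] EuclideanSpace ℝ (Fin n))
    (hsym : IsSelfAdjoint H) (hHb : ‖H‖ ≤ Lg)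
    (s : EuclideanSpace ℝ (Fin n))
    (hm : f₀ + (inner ℝ g s : ℝ) + (1 / 2) * (inner ℝ s (H s) : ℝ)
            + σ / (2 + α) * ‖s‖ ^ ((2 : ℝ) + α) < f₀) :
    ‖s‖ ≤ max ((3 * (2 + α) * Lg / (4 * σ)) ^ (1 / α))
              ((3 * (2 + α) * ‖g‖ / σ) ^ (1 / (1 + α))) := by
  by_contra hcon
  push_neg at hcon
  set r := ‖s‖ with hr
  have h2α : (0:ℝ) < 2 + α := by linarith
  have h1α : (0:ℝ) < 1 + α := by linarith
  have hc1 : (0:ℝ) ≤ 3 * (2 + α) * Lg / (4 * σ) := by positivity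
  have hc2 : (0:ℝ) ≤ 3 * (2 + α) * ‖g‖ / σ := by positivity
  have hA := lt_of_le_of_lt (le_max_left _ _) hcon
  have hB := lt_of_le_of_lt (le_max_right _ _) hcon
  have hrpos : 0 < r := lt_of_le_of_lt (Real.rpow_nonneg hc1 _) hA
  -- from hA : c1^(1/α) < r, get c1 < r^α
  have hpα : 3 * (2 + α) * Lg / (4 * σ) < r ^ α := by
    have h := Real.rpow_lt_rpow (Real.rpow_nonneg hc1 _) hA hα0
    rwa [← Real.rpow_mul hc1, one_div_mul_cancel hα0.ne', Real.rpow_one] at h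
  have hp1α : 3 * (2 + α) * ‖g‖ / σ < r ^ ((1:ℝ) + α) := by
    have h := Real.rpow_lt_rpow (Real.rpow_nonneg hc2 _) hB h1α
    rwa [← Real.rpow_mul hc2, one_div_mul_cancel h1α.ne', Real.rpow_one] at h
  have hsplit2 : r ^ ((2:ℝ) + α) = r ^ (2:ℕ) * r ^ α := by
    rw [← Real.rpow_natCast r 2, ← Real.rpow_add hrpos]; norm_num
  have hsplit1 : r ^ ((1:ℝ) + α) = r * r ^ α := by
    rw [Real.rpow_add hrpos, Real.rpow_one]
  have hg : -(‖g‖ * r) ≤ (inner ℝ g s : ℝ) := by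
    have := abs_real_inner_le_norm g s
    have := neg_le_of_abs_le this
    linarith [this]
  have hHs : ‖H s‖ ≤ Lg * r := by
    calc ‖H s‖ ≤ ‖H‖ * ‖s‖ := H.le_opNorm s
    _ ≤ Lg * r := by
        apply mul_le_mul_of_nonneg_right hHb (norm_nonneg s)
  have hH : -(Lg * r ^ 2) ≤ (inner ℝ s (H s) : ℝ) := by
    have h1 := abs_real_inner_le_norm s (H s)
    have h2 := neg_le_of_abs_le h1
    nlinarith [norm_nonneg s, norm_nonneg (H s)]
  -- clear denominators
  have hpα' : 3 * (2 + α) * Lg < r ^ α * (4 * σ) := by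
    have := (div_lt_iff₀ (by positivity : (0:ℝ) < 4 * σ)).mp hpα
    linarith
  have hp1α' : 3 * (2 + α) * ‖g‖ < r ^ ((1:ℝ) + α) * σ :=
    (div_lt_iff₀ hσ).mp hp1α
  have hm' : σ * r ^ ((2:ℝ) + α) < (2 + α) * (‖g‖ * r + Lg * r ^ 2 / 2) := by
    have h1 : σ / (2 + α) * r ^ ((2:ℝ) + α) < ‖g‖ * r + Lg * r ^ 2 / 2 := by
      linarith
    have h2 := mul_lt_mul_of_pos_left h1 h2α
    calc σ * r ^ ((2:ℝ) + α) = (2 + α) * (σ / (2 + α) * r ^ ((2:ℝ) + α)) := by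
          field_simp
    _ < (2 + α) * (‖g‖ * r + Lg * r ^ 2 / 2) := h2
  have e1 := mul_lt_mul_of_pos_right hpα' (pow_pos hrpos 2)
  have e2 := mul_lt_mul_of_pos_right hp1α' hrpos
  rw [hsplit1] at e2
  rw [hsplit2] at hm'
  nlinarith [e1, e2, hm']
end

section
/- In the GQT method setting, suppose s and r satisfy (H + λI)s = −g + r with rᵀs ≤ 0, λ + λ_min(H) ≥ ω‖g‖^{α/(1+α)} and λ ≥ max(0, −λ_min(H) + ω‖g‖^{α/(1+α)}) with λ_min(H) + 2λ ≥ ω‖g‖^{α/(1+α)} + λ. Then the quadratic model decrease satisfies f₀ − m(s) = −gᵀs − ½sᵀHs ≥ (½λ_min(H) + λ)‖s‖² ≥ ½ ω‖g‖^{α/(1+α)} ‖s‖², where m(s) = f₀ + gᵀs + ½sᵀHs. -/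
lemma rayleigh_lower {n : ℕ} [NeZero n] (H : Matrix (Fin n) (Fin n) ℝ)
    (hH : H.IsHermitian) (s : EuclideanSpace ℝ (Fin n)) :
    lamMin H hH * ‖s‖ ^ 2 ≤ (inner ℝ s (Matrix.toEuclideanLin H s) : ℝ) := by
  set b := hH.eigenvectorBasis with hb
  set T := Matrix.toEuclideanLin H with hT
  have hsym : LinearMap.IsSymmetric T := Matrix.isHermitian_iff_isSymmetric.1 hH
  have hTb : ∀ i, T (b i) = hH.eigenvalues i • (b i) := by
    intro i
    ext j
    have := congrFun (hH.mulVec_eigenvectorBasis i) j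
    simpa [hT, Matrix.toEuclideanLin_apply] using this
  have hrepr : ∀ i, b.repr (T s) i = hH.eigenvalues i * b.repr s i := by
    intro i
    rw [b.repr_apply_apply, b.repr_apply_apply, ← hsym (b i) s, hTb i,
      real_inner_smul_left]
  have hinner : (inner ℝ s (T s) : ℝ) = ∑ i, hH.eigenvalues i * (b.repr s i) ^ 2 := by
    rw [← b.repr.inner_map_map s (T s)]
    simp only [PiLp.inner_apply, RCLike.inner_apply, conj_trivial]
    exact Finset.sum_congr rfl fun i _ => by rw [hrepr i]; ring
  have hnorm : ‖s‖ ^ 2 = ∑ i, (b.repr s i) ^ 2 := by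
    rw [← real_inner_self_eq_norm_sq, ← b.repr.inner_map_map s s]
    simp only [PiLp.inner_apply, RCLike.inner_apply, conj_trivial]
    exact Finset.sum_congr rfl fun i _ => by ring
  rw [hinner, hnorm, Finset.mul_sum]
  apply Finset.sum_le_sum
  intro i _
  have hmin : lamMin H hH ≤ hH.eigenvalues i :=
    ciInf_le (Set.Finite.bddBelow (Set.finite_range _)) i
  nlinarith [sq_nonneg (b.repr s i)]

/-- GQT model decrease. If `(H + λI)s = -g + r`, `rᵀs ≤ 0`,
`λ + λmin(H) ≥ ω‖g‖^(α/(1+α))`, `λ ≥ max(0, -λmin(H) + ω‖g‖^(α/(1+α)))` and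
`λmin(H) + 2λ ≥ ω‖g‖^(α/(1+α)) + λ`, then the quadratic model decrease satisfies
`f₀ − m(s) = −gᵀs − ½sᵀHs ≥ (½λmin(H) + λ)‖s‖² ≥ ½ω‖g‖^(α/(1+α))‖s‖²`. -/
theorem gqt_model_decrease {n : ℕ} [NeZero n]
    (α ω lam f₀ : ℝ) (hα0 : 0 < α) (hα1 : α ≤ 1) (hω : 0 < ω)
    (H : Matrix (Fin n) (Fin n) ℝ) (hH : H.IsHermitian)
    (g s r : EuclideanSpace ℝ (Fin n))
    (heq : Matrix.toEuclideanLin (H + lam • (1 : Matrix (Fin n) (Fin n) ℝ)) s = -g + r)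
    (hrs : (inner ℝ r s : ℝ) ≤ 0)
    (hlam0 : 0 ≤ lam)
    (h1 : ω * ‖g‖ ^ (α / (1 + α)) ≤ lam + lamMin H hH)
    (h2 : max 0 (-lamMin H hH + ω * ‖g‖ ^ (α / (1 + α))) ≤ lam)
    (h3 : ω * ‖g‖ ^ (α / (1 + α)) + lam ≤ lamMin H hH + 2 * lam) :
    f₀ - (f₀ + (inner ℝ g s : ℝ) + (1 / 2) * (inner ℝ s (Matrix.toEuclideanLin H s) : ℝ))
        = -(inner ℝ g s : ℝ) - (1 / 2) * (inner ℝ s (Matrix.toEuclideanLin H s) : ℝ) ∧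
    ((1 / 2) * lamMin H hH + lam) * ‖s‖ ^ 2
        ≤ -(inner ℝ g s : ℝ) - (1 / 2) * (inner ℝ s (Matrix.toEuclideanLin H s) : ℝ) ∧
    (1 / 2) * ω * ‖g‖ ^ (α / (1 + α)) * ‖s‖ ^ 2
        ≤ ((1 / 2) * lamMin H hH + lam) * ‖s‖ ^ 2 := by
  have hexp : Matrix.toEuclideanLin (H + lam • (1 : Matrix (Fin n) (Fin n) ℝ)) s
      = Matrix.toEuclideanLin H s + lam • s := by
    rw [map_add, map_smul]
    ext j
    simp [Matrix.toEuclideanLin_apply, Matrix.one_mulVec]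
  rw [hexp] at heq
  have key : (inner ℝ s (Matrix.toEuclideanLin H s) : ℝ) + lam * ‖s‖ ^ 2
      = -(inner ℝ g s : ℝ) + (inner ℝ r s : ℝ) := by
    have := congrArg (fun v => (inner ℝ s v : ℝ)) heq
    simp only [inner_add_right, inner_neg_right, real_inner_smul_right] at this
    rw [real_inner_self_eq_norm_sq] at this
    rw [this, real_inner_comm s g, real_inner_comm s r]
  have hray := rayleigh_lower H hH s
  have hsq : (0:ℝ) ≤ ‖s‖ ^ 2 := sq_nonneg _
  refine ⟨by ring, by linarith, by nlinarith⟩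
end

section
/- In the CRS step analysis: let ε ∈ (0,1), f ∈ [½,1], g = −2εf, H = 4ε^{1/2}f², σ̄ > 0, κ_rg ∈ [0,1). Suppose λ ∈ [0, σ̄s], s > 0, and |g + (H+λ)s| ≤ κ_rg|g|. Then s ∈ [2(1−κ_rg)εf/(4ε^{1/2}f² + σ̄s), (1+κ_rg)ε^{1/2}/(2f)], and writing s = θ ε^{1/2}/(2f), θ satisfies θ ∈ [(1−κ_rg)/(1 + σ̄(1+κ_rg)), 1+κ_rg]. -/
set_option maxHeartbeats 2000000 in
/-- CRS step analysis. With `g = −2εf`, `H = 4ε^(1/2)f²`,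
`λ ∈ [0, σ̄s]`, `s > 0` and `|g + (H+λ)s| ≤ κrg|g|`, the step satisfies
`2(1−κrg)εf/(4ε^(1/2)f² + σ̄s) ≤ s ≤ (1+κrg)ε^(1/2)/(2f)`; writing
`s = θ ε^(1/2)/(2f)`, `θ ∈ [(1−κrg)/(1+σ̄(1+κrg)), 1+κrg]`. -/
theorem crs_step_bounds (ε f σb κrg lam s : ℝ)
    (hε0 : 0 < ε) (hε1 : ε < 1) (hf : f ∈ Set.Icc (1 / 2 : ℝ) 1)
    (hσ : 0 < σb) (hκ0 : 0 ≤ κrg) (hκ1 : κrg < 1)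
    (hlam0 : 0 ≤ lam) (hlam1 : lam ≤ σb * s) (hs : 0 < s)
    (hres : |(-(2 * ε * f)) + (4 * ε ^ ((1 : ℝ) / 2) * f ^ 2 + lam) * s|
              ≤ κrg * |(-(2 * ε * f))|) :
    (2 * (1 - κrg) * ε * f / (4 * ε ^ ((1 : ℝ) / 2) * f ^ 2 + σb * s) ≤ s ∧
      s ≤ (1 + κrg) * ε ^ ((1 : ℝ) / 2) / (2 * f)) ∧
    ∀ θ : ℝ, s = θ * ε ^ ((1 : ℝ) / 2) / (2 * f) →
      (1 - κrg) / (1 + σb * (1 + κrg)) ≤ θ ∧ θ ≤ 1 + κrg := by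
  obtain ⟨hf1, hf2⟩ := hf
  have hf0 : (0 : ℝ) < f := by linarith
  set r := ε ^ ((1 : ℝ) / 2) with hrdef
  have hr : 0 < r := Real.rpow_pos_of_pos hε0 _
  have h2 : r ^ (2 : ℕ) = ε := by
    rw [hrdef, ← Real.rpow_natCast (ε ^ ((1 : ℝ) / 2)) 2,
      ← Real.rpow_mul hε0.le]
    norm_num
  have hrr : r * r = ε := by rw [← h2]; ring
  have habs : |(-(2 * ε * f))| = 2 * ε * f := by
    rw [abs_neg, abs_of_pos]; positivity
  rw [habs, abs_le] at hres
  obtain ⟨hr1, hr2⟩ := hres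
  have hr1' := hr1; rw [← hrr] at hr1'
  have hr2' := hr2; rw [← hrr] at hr2'
  have hden : 0 < 4 * r * f ^ 2 + σb * s := by positivity
  have hlamS : lam * s ≤ σb * s * s := mul_le_mul_of_nonneg_right hlam1 hs.le
  have hlow : 2 * (1 - κrg) * ε * f / (4 * r * f ^ 2 + σb * s) ≤ s := by
    rw [div_le_iff₀ hden]
    nlinarith [hlamS]
  have hup : s * (2 * f) ≤ (1 + κrg) * r := by
    nlinarith [mul_nonneg hlam0 hs.le, mul_pos hr hf0, hr2']
  refine ⟨⟨hlow, ?_⟩, ?_⟩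
  · rw [le_div_iff₀ (by linarith : (0:ℝ) < 2 * f)]; linarith
  · intro θ hθ
    have hθ' : s * (2 * f) = θ * r := by
      field_simp at hθ; linarith
    have hθpos : 0 < θ := by
      nlinarith [mul_pos hs hf0, hr, hθ']
    have hθup : θ ≤ 1 + κrg := by
      nlinarith [hup, hθ', hr]
    refine ⟨?_, hθup⟩
    have hden2 : 0 < 1 + σb * (1 + κrg) := by
      have h := mul_nonneg hσ.le (by linarith : (0:ℝ) ≤ 1 + κrg)
      linarith
    rw [div_le_iff₀ hden2]
    have key : (1 - κrg) * (2 * (r * r) * f) ≤ (4 * r * f ^ 2) * s + σb * s * s := by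
      linarith [hlamS, hr1']
    have e1 : (4 * r * f ^ 2) * s = 2 * r * r * f * θ := by
      linear_combination (2 * r * f) * hθ'
    have hcube : (1 : ℝ) ≤ 8 * f ^ 3 := by nlinarith [sq_nonneg f, hf1]
    have hs4 : s ≤ 4 * r * f ^ 2 * (1 + κrg) := by
      nlinarith [hup,
        mul_le_mul_of_nonneg_right hcube
          (mul_nonneg hr.le (by linarith : (0:ℝ) ≤ 1 + κrg)), hf0]
    have e2 : σb * s * s ≤ (1 + κrg) * σb * (2 * r * r * f * θ) :=
      calc σb * s * s ≤ σb * s * (4 * r * f ^ 2 * (1 + κrg)) :=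
            mul_le_mul_of_nonneg_left hs4 (mul_nonneg hσ.le hs.le)
        _ = (1 + κrg) * σb * ((4 * r * f ^ 2) * s) := by ring
        _ = (1 + κrg) * σb * (2 * r * r * f * θ) := by rw [e1]
    have final : (1 - κrg) * (2 * (r * r) * f) ≤
        (1 + σb * (1 + κrg)) * (2 * (r * r) * f * θ) := by
      nlinarith [key, e1, e2]
    nlinarith [final, mul_pos (mul_pos hr hr) hf0]
end

section
/- Steepest-descent slow example step property: for ε ∈ (0,1), k_ε = ⌈ε^{−2}⌉, define f_k = 1 − ½kε², g_k = −2εf_k, μ_k = 1/(4f_k²), s_k = −μ_k g_k = ε/(2f_k) for k = 0,…,k_ε−1. Then f_k ∈ [½,1], μ_k ∈ [¼,1], s_k ≤ ε < 1, and for any constants 0 < μ₂ < ½ < μ₁ < 1 the Goldstein conditions hold exactly in the sense that f_{k+1} − f_k = −½ε² = ½ g_k s_k, so f_k + μ₁ g_k s_k ≤ f_{k+1} ≤ f_k + μ₂ g_k s_k. -/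
/-- steepest-descent slow example. With `k_ε = ⌈ε^(−2)⌉`,
`f_k = 1 − ½kε²`, `g_k = −2εf_k`, `μ_k = 1/(4f_k²)`, `s_k = ε/(2f_k)`, one has
`f_k ∈ [½,1]`, `μ_k ∈ [¼,1]`, `s_k = −μ_k g_k ≤ ε < 1`, the exact decrease
`f_{k+1} − f_k = −½ε² = ½ g_k s_k`, and the Goldstein conditions hold for any
`0 < μ₂ < ½ < μ₁ < 1`. -/
theorem steepest_descent_slow_example (ε : ℝ) (hε0 : 0 < ε) (hε1 : ε < 1) :
    let kε : ℕ := ⌈ε ^ (-2 : ℝ)⌉₊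
    let f : ℕ → ℝ := fun k => 1 - (k : ℝ) / 2 * ε ^ 2
    let g : ℕ → ℝ := fun k => -(2 * ε * f k)
    let μ : ℕ → ℝ := fun k => 1 / (4 * (f k) ^ 2)
    let s : ℕ → ℝ := fun k => ε / (2 * f k)
    ∀ k < kε,
      f k ∈ Set.Icc (1 / 2 : ℝ) 1 ∧
      μ k ∈ Set.Icc (1 / 4 : ℝ) 1 ∧
      s k = -(μ k * g k) ∧ s k ≤ ε ∧ ε < 1 ∧
      f (k + 1) - f k = -(ε ^ 2) / 2 ∧
      f (k + 1) - f k = (1 / 2) * (g k * s k) ∧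
      ∀ μ₁ μ₂ : ℝ, 0 < μ₂ → μ₂ < 1 / 2 → 1 / 2 < μ₁ → μ₁ < 1 →
        f k + μ₁ * (g k * s k) ≤ f (k + 1) ∧ f (k + 1) ≤ f k + μ₂ * (g k * s k) := by
  intro kε f g μ s k hk
  have hε2 : (0:ℝ) < ε ^ 2 := by positivity
  have hk' : (k : ℝ) * ε ^ 2 < 1 := by
    have h1 : (k : ℝ) < ε ^ (-2 : ℝ) := Nat.lt_ceil.1 hk
    have h2 : ε ^ (-2 : ℝ) = (ε ^ 2)⁻¹ := by
      rw [show (-2 : ℝ) = -((2:ℕ):ℝ) by norm_num, Real.rpow_neg hε0.le,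
        Real.rpow_natCast]
    rw [h2] at h1
    calc (k : ℝ) * ε ^ 2 < (ε ^ 2)⁻¹ * ε ^ 2 := by nlinarith
      _ = 1 := inv_mul_cancel₀ hε2.ne'
  have hkpos : (0:ℝ) ≤ (k : ℝ) := Nat.cast_nonneg k
  have hf2 : 1/2 < 1 - (k : ℝ) / 2 * ε ^ 2 := by nlinarith
  have hf1 : 1 - (k : ℝ) / 2 * ε ^ 2 ≤ 1 := by nlinarith
  have hfne : 1 - (k : ℝ) / 2 * ε ^ 2 ≠ 0 := by intro h; rw [h] at hf2; norm_num at hf2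
  have h2ne : (2 - (k : ℝ) * ε ^ 2) ≠ 0 := by intro h; nlinarith
  have hgs : -(2 * ε * (1 - (k : ℝ) / 2 * ε ^ 2)) *
      (ε / (2 * (1 - (k : ℝ) / 2 * ε ^ 2))) = -(ε ^ 2) := by
    field_simp
    have h3 : (2 - ε ^ 2 * (k : ℝ)) ≠ 0 := by rw [mul_comm]; exact h2ne
    calc _ = (ε ^ 2 * (k : ℝ) - 2) * (2 - ε ^ 2 * (k : ℝ))⁻¹ := by ring
      _ = -1 := by
        rw [show ε ^ 2 * (k : ℝ) - 2 = -(2 - ε ^ 2 * (k : ℝ)) by ring, neg_mul,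
          mul_inv_cancel₀ h3]
  have hcast : ((k + 1 : ℕ) : ℝ) = (k : ℝ) + 1 := by push_cast; ring
  refine ⟨⟨?_, ?_⟩, ⟨?_, ?_⟩, ?_, ?_, hε1, ?_, ?_, ?_⟩
  · show (1:ℝ)/2 ≤ 1 - (k : ℝ) / 2 * ε ^ 2
    linarith
  · exact hf1
  · show (1:ℝ)/4 ≤ 1 / (4 * (1 - (k : ℝ) / 2 * ε ^ 2) ^ 2)
    rw [div_le_div_iff₀ (by norm_num) (by positivity)]
    nlinarith [sq_nonneg ((k : ℝ) / 2 * ε ^ 2)]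
  · show 1 / (4 * (1 - (k : ℝ) / 2 * ε ^ 2) ^ 2) ≤ 1
    rw [div_le_one (by positivity)]
    nlinarith
  · show ε / (2 * (1 - (k : ℝ) / 2 * ε ^ 2)) =
      -(1 / (4 * (1 - (k : ℝ) / 2 * ε ^ 2) ^ 2) * -(2 * ε * (1 - (k : ℝ) / 2 * ε ^ 2)))
    field_simp
    ring
  · show ε / (2 * (1 - (k : ℝ) / 2 * ε ^ 2)) ≤ ε
    rw [div_le_iff₀ (by linarith)]
    nlinarith
  · show (1 - ((k + 1 : ℕ) : ℝ) / 2 * ε ^ 2) - (1 - (k : ℝ) / 2 * ε ^ 2) = -(ε ^ 2) / 2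
    rw [hcast]; ring
  · show (1 - ((k + 1 : ℕ) : ℝ) / 2 * ε ^ 2) - (1 - (k : ℝ) / 2 * ε ^ 2) =
      (1/2) * (-(2 * ε * (1 - (k : ℝ) / 2 * ε ^ 2)) *
        (ε / (2 * (1 - (k : ℝ) / 2 * ε ^ 2))))
    rw [hgs, hcast]; ring
  · intro μ₁ μ₂ h1 h2 h3 h4
    constructor
    · show (1 - (k : ℝ) / 2 * ε ^ 2) + μ₁ * (-(2 * ε * (1 - (k : ℝ) / 2 * ε ^ 2)) *
        (ε / (2 * (1 - (k : ℝ) / 2 * ε ^ 2)))) ≤ 1 - ((k + 1 : ℕ) : ℝ) / 2 * ε ^ 2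
      rw [hgs, hcast]; nlinarith
    · show 1 - ((k + 1 : ℕ) : ℝ) / 2 * ε ^ 2 ≤ (1 - (k : ℝ) / 2 * ε ^ 2) +
        μ₂ * (-(2 * ε * (1 - (k : ℝ) / 2 * ε ^ 2)) *
        (ε / (2 * (1 - (k : ℝ) / 2 * ε ^ 2))))
      rw [hgs, hcast]; nlinarith
end
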